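/- If q(x,t) satisfies the Robin boundary condition q_x(0,t) = α q(0,t) for real α, then the matrix V(λ) = -2iλ²σ₃ + 2λQ - iQ_xσ₃ - iQ²σ₃, with Q = [[0, q],[-conj(q), 0]], evaluated at x=0, satisfies K(λ)V(-λ)|_{x=0} = V(λ)|_{x=0}K(λ), where K(λ) = diag((iα+2λ)/(iα-2λ), 1). -/
import Mathlib


open Complex Matrix

noncomputable def sigma3 : Matrix (Fin 2) (Fin 2) ℂ := !![1, 0; 0, -1]

/-- The t-part of the Lax pair, V(λ) = -2iλ²σ₃ + 2λQ - iQ_xσ₃ - iQ²σ₃,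
built from the boundary values q, q_x. -/
noncomputable def Vmat (q qx l : ℂ) : Matrix (Fin 2) (Fin 2) ℂ :=
  (-2 * I * l ^ 2) • sigma3 + (2 * l) • !![0, q; -(starRingEnd ℂ) q, 0]
    + (-I) • (!![0, qx; -(starRingEnd ℂ) qx, 0] * sigma3)
    + (-I) • (!![0, q; -(starRingEnd ℂ) q, 0] * !![0, q; -(starRingEnd ℂ) q, 0] * sigma3)

noncomputable def fα (α : ℝ) (l : ℂ) : ℂ := (I * α + 2 * l) / (I * α - 2 * l)

noncomputable def Kmat (α : ℝ) (l : ℂ) : Matrix (Fin 2) (Fin 2) ℂ :=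
  !![fα α l, 0; 0, 1]

theorem stmt5 (α : ℝ) (q qx l : ℂ) (hRobin : qx = α * q)
    (h1 : l ≠ I * α / 2) (h2 : l ≠ -(I * α / 2)) :
    Kmat α l * Vmat q qx (-l) = Vmat q qx l * Kmat α l := by
  have hd : (I * α - 2 * l) ≠ 0 := by
    intro h
    apply h1
    field_simp
    linear_combination -h
  have hconj : (starRingEnd ℂ) qx = α * (starRingEnd ℂ) q := by
    rw [hRobin, _root_.map_mul, Complex.conj_ofReal]
  subst hRobin
  ext i j
  fin_cases i <;> fin_cases j <;>
    simp [Vmat, Kmat, fα, sigma3, Matrix.mul_apply, Fin.sum_univ_two, hconj] <;>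
    field_simp <;> ring
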